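/- (Theorem 3: self-triggering lower bound.) Let Z : ℝ^(2n) → ℝ^(2n) be C^(p−1) and homogeneous of degree ξ > 0 with respect to the standard dilation, and let Γ : ℝ^(2n) → ℝ be C^p and homogeneous of degree ϑ ∈ ℝ. Let 𝓏 be a flow of Z satisfying the scaling property 𝓏(t, λ·z) = λ·𝓏(λ^ξ·t, z) for all λ > 0. Fix z ∈ ℝ^(2n) with Γ(z) < 0, coefficients χ₀, …, χ_{p−1} ∈ ℝ with χ_i ≥ 0 for i ≤ p−2 satisfying L_Z^p Γ ≤ Σ_{i=0}^{p−1} χ_i·L_Z^i Γ on a set M, a time t⋆ > 0, and λ > 0 such that: (i) the trajectory 𝓏(s, λ·z) remains in M for s ∈ [0, t⋆]; (ii) Σ_{i=0}^{p−1} β_i(t⋆, z)·λ^(ϑ + i·ξ) = 0, where β_i(t⋆, z) = (exp(A_p·t⋆))_{1,(i+1)}·L_Z^i Γ(z) (equivalently, q = λ^ξ is a root of Σ_{i=0}^{p−1} β_i(t⋆, z)·q^i = 0 and y₁(t⋆, μ^p(λ·z)) = 0); and (iii) y₁(s, μ^p(λ·z)) ≠ 0 for every s ∈ (0, t⋆).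 Then Γ(𝓏(t, z)) < 0 for all t ∈ [0, λ^ξ·t⋆); consequently the inter-execution time satisfies τ(z) ≥ τ↓(z) := λ^ξ·t⋆ = q·t⋆. -/

import Mathlib

/-- The Lie derivative of `g` along the vector field `Z`: `L_Z g (z) = Dg(z) (Z z)`. -/
noncomputable def lieDeriv {E : Type*} [NormedAddCommGroup E] [NormedSpace ℝ E]
    (Z : E → E) (g : E → ℝ) : E → ℝ :=
  fun z => fderiv ℝ g z (Z z)

/-- Iterated Lie derivatives: `L_Z^0 g = g`, `L_Z^(k+1) g = L_Z (L_Z^k g)`. -/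
noncomputable def lieDerivIter {E : Type*} [NormedAddCommGroup E] [NormedSpace ℝ E]
    (Z : E → E) (g : E → ℝ) : ℕ → E → ℝ
  | 0 => g
  | k + 1 => lieDeriv Z (lieDerivIter Z g k)

/-- The `p × p` companion matrix with ones on the superdiagonal and last row
`(χ₀, χ₁, …, χ_{p-1})`. -/
def companionMatrix (p : ℕ) (χ : Fin p → ℝ) : Matrix (Fin p) (Fin p) ℝ :=
  Matrix.of fun i j =>
    if (i : ℕ) + 1 = p then χ j else if (j : ℕ) = (i : ℕ) + 1 then 1 else 0

/-!
Put `w = l • z` and `μ(s) = μ^p(𝓏 s w)`. Along the flow `μ' = A_p μ - e(s) e_p`, where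
`e = ∑ χ_i L_Z^i Γ - L_Z^p Γ ≥ 0` while the trajectory stays in `M`. Since `A_p` has nonnegative
off-diagonal entries, `exp (r • A_p)` is entrywise nonnegative for `r ≥ 0`, so
`u ↦ exp ((t - u) • A_p) *ᵥ μ(u)` decreases on `[0, t]` and `Γ (𝓏 t w) ≤ y₁(t, μ^p(w))`. The
right-hand side starts at `Γ w < 0` and does not vanish on `(0, t⋆)`, hence stays negative on
`[0, t⋆)`; homogeneity, `Γ (𝓏 t w) = l ^ ϑ * Γ (𝓏 (l ^ ξ * t) z)`, transfers this to `z`.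
-/

open NormedSpace Set Matrix

namespace Matrix

theorem mulVec_nonneg {m n R : Type*} [Fintype n] [Semiring R] [PartialOrder R]
    [IsOrderedRing R] {M : Matrix m n R} (hM : ∀ i j, 0 ≤ M i j) {v : n → R} (hv : 0 ≤ v) :
    0 ≤ M *ᵥ v :=
  fun i => Finset.sum_nonneg fun j _ => mul_nonneg (hM i j) (hv j)

variable {n : Type*} [Fintype n] [DecidableEq n]

theorem exp_apply_nonneg_of_nonneg {B : Matrix n n ℝ} (hB : ∀ i j, 0 ≤ B i j) (i j : n) :
    0 ≤ exp B i j := by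
  let _ : NormedRing (Matrix n n ℝ) := Matrix.linftyOpNormedRing
  let _ : NormedAlgebra ℝ (Matrix n n ℝ) := Matrix.linftyOpNormedAlgebra
  have hpow : ∀ k : ℕ, ∀ i j, 0 ≤ (B ^ k) i j := by
    intro k
    induction k with
    | zero => intro i j; rw [pow_zero, one_apply]; split_ifs <;> norm_num
    | succ k ih =>
      intro i j
      rw [pow_succ, mul_apply]
      exact Finset.sum_nonneg fun l _ => mul_nonneg (ih i l) (hB l j)
  have hsum := Pi.hasSum.mp (Pi.hasSum.mp (exp_series_hasSum_exp' (𝕂 := ℝ) B) i) j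
  exact hsum.nonneg fun k => mul_nonneg (by positivity) (hpow k i j)

/-- `A + c • 1` with `c = ∑ₖ |A k k|` is entrywise nonnegative, and the scalar shift only
contributes the factor `Real.exp (-(r * c))`. -/
theorem exp_smul_apply_nonneg_of_offDiag_nonneg {A : Matrix n n ℝ}
    (hA : ∀ i j, i ≠ j → 0 ≤ A i j) {r : ℝ} (hr : 0 ≤ r) (i j : n) :
    0 ≤ exp (r • A) i j := by
  set c : ℝ := ∑ k, |A k k|
  have hshift : ∀ i j, 0 ≤ (r • (A + c • 1)) i j := by
    intro i j
    refine mul_nonneg hr ?_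
    rcases eq_or_ne i j with rfl | hij
    · have : |A i i| ≤ c := Finset.single_le_sum (f := fun k => |A k k|)
        (fun k _ => abs_nonneg _) (Finset.mem_univ i)
      simp only [add_apply, smul_apply, one_apply_eq, smul_eq_mul, mul_one]
      linarith [neg_abs_le (A i i)]
    · simp only [add_apply, smul_apply, one_apply_ne hij, smul_eq_mul, mul_zero, add_zero]
      exact hA i j hij
  have hsplit : r • A = algebraMap ℝ (Matrix n n ℝ) (-(r * c)) + r • (A + c • 1) := by
    rw [Algebra.algebraMap_eq_smul_one]
    module
  rw [hsplit, Matrix.exp_add_of_commute _ _ (Algebra.commute_algebraMap_left _ _),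
    algebraMap_eq_diagonal, exp_diagonal, diagonal_mul, Pi.exp_def, ← Real.exp_eq_exp_ℝ]
  exact mul_nonneg (Real.exp_pos _).le (exp_apply_nonneg_of_nonneg hshift i j)

theorem hasDerivAt_exp_smul_mulVec (A : Matrix n n ℝ) {f : ℝ → ℝ} {f' : ℝ} {v : ℝ → n → ℝ}
    {v' : n → ℝ} {s : ℝ} (hf : HasDerivAt f f' s) (hv : HasDerivAt v v' s) :
    HasDerivAt (fun u => exp (f u • A) *ᵥ v u) (exp (f s • A) *ᵥ (v' + f' • A *ᵥ v s)) s := by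
  let _ : NormedRing (Matrix n n ℝ) := Matrix.linftyOpNormedRing
  let _ : NormedAlgebra ℝ (Matrix n n ℝ) := Matrix.linftyOpNormedAlgebra
  let B : Matrix n n ℝ →L[ℝ] (n → ℝ) →L[ℝ] n → ℝ := LinearMap.toContinuousLinearMap
    ((LinearMap.toContinuousLinearMap : ((n → ℝ) →ₗ[ℝ] n → ℝ) ≃ₗ[ℝ] _).toLinearMap ∘ₗ
      mulVecBilin ℝ ℝ)
  have hexp : HasDerivAt (fun u => exp (f u • A)) (f' • (A * exp (f s • A))) s :=
    (hasDerivAt_exp_smul_const' A (f s)).scomp s hf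
  have hderiv : B (exp (f s • A)) v' + B (f' • (A * exp (f s • A))) (v s)
      = exp (f s • A) *ᵥ (v' + f' • A *ᵥ v s) := by
    simp [B, mulVec_add, mulVec_smul, mulVec_mulVec,
      ((Commute.refl A).smul_right (f s)).exp_right.eq]
  exact hderiv ▸ B.hasDerivAt_of_bilinear (fun _ => hexp) (fun _ => hv)

theorem continuous_exp_smul_mulVec (A : Matrix n n ℝ) (v : n → ℝ) :
    Continuous fun s : ℝ => exp (s • A) *ᵥ v :=
  continuous_iff_continuousAt.mpr fun s =>
    (hasDerivAt_exp_smul_mulVec A (hasDerivAt_id s) (hasDerivAt_const s v)).continuousAt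

theorem le_exp_smul_mulVec_of_hasDerivAt {A : Matrix n n ℝ} (hA : ∀ i j, i ≠ j → 0 ≤ A i j)
    {g b : ℝ → n → ℝ} {t : ℝ} (ht : 0 ≤ t)
    (hg : ∀ s ∈ Icc 0 t, HasDerivAt g (A *ᵥ g s - b s) s) (hb : ∀ s ∈ Icc 0 t, 0 ≤ b s) :
    g t ≤ exp (t • A) *ᵥ g 0 := by
  set V : ℝ → n → ℝ := fun u => exp ((t - u) • A) *ᵥ g u
  have hV : ∀ s ∈ Icc 0 t, HasDerivAt V (-(exp ((t - s) • A) *ᵥ b s)) s := fun s hs => by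
    have h := hasDerivAt_exp_smul_mulVec A ((hasDerivAt_id s).const_sub t) (hg s hs)
    rwa [neg_one_smul, show A *ᵥ g s - b s + -(A *ᵥ g s) = -b s by abel, mulVec_neg] at h
  have hanti : ∀ i, AntitoneOn (fun u => V u i) (Icc 0 t) := fun i => by
    refine antitoneOn_of_hasDerivWithinAt_nonpos (convex_Icc 0 t)
      (fun s hs => ((hasDerivAt_pi.mp (hV s hs) i).continuousAt).continuousWithinAt)
      (fun s hs => (hasDerivAt_pi.mp (hV s (interior_subset hs)) i).hasDerivWithinAt)
      fun s hs => ?_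
    have hs' := interior_subset hs
    exact neg_nonpos.mpr <| mulVec_nonneg
      (exp_smul_apply_nonneg_of_offDiag_nonneg hA (by linarith [hs'.2])) (hb s hs') i
  intro i
  simpa [V] using hanti i ⟨le_rfl, ht⟩ ⟨ht, le_rfl⟩ ht

end Matrix

theorem companionMatrix_offDiag_nonneg {p : ℕ} {χ : Fin p → ℝ}
    (hχ : ∀ i : Fin p, (i : ℕ) + 1 < p → 0 ≤ χ i) (i j : Fin p) (hij : i ≠ j) :
    0 ≤ companionMatrix p χ i j := by
  simp only [companionMatrix, Matrix.of_apply]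
  split_ifs with hi
  · exact hχ j (by omega)
  all_goals norm_num

theorem companionMatrix_mulVec_apply {p : ℕ} (χ : Fin p → ℝ) (f : ℕ → ℝ) (j : Fin p) :
    (companionMatrix p χ *ᵥ fun i : Fin p => f i) j =
      if (j : ℕ) + 1 = p then ∑ k, χ k * f k else f (j + 1) := by
  simp only [Matrix.mulVec, dotProduct, companionMatrix, Matrix.of_apply]
  split_ifs with hj
  · rfl
  · rw [Finset.sum_eq_single (⟨j + 1, by omega⟩ : Fin p)]
    · simp
    · intro k _ hk
      rw [if_neg fun h => hk (Fin.ext h), zero_mul]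
    · simp

theorem ContinuousOn.neg_of_ne_zero {f : ℝ → ℝ} {a b : ℝ} (hf : ContinuousOn f (Ico a b))
    (ha : f a < 0) (hne : ∀ s ∈ Ioo a b, f s ≠ 0) : ∀ s ∈ Ico a b, f s < 0 := by
  intro s hs
  by_contra! hs0
  obtain ⟨c, hc, hc0⟩ := isPreconnected_Ico.intermediate_value
    (left_mem_Ico.mpr (hs.1.trans_lt hs.2)) hs hf ⟨ha.le, hs0⟩
  rcases hc.1.eq_or_lt with rfl | hac
  · exact ha.ne hc0
  · exact hne c ⟨hac, hc.2⟩ hc0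

section LieDerivative

variable {E : Type*} [NormedAddCommGroup E] [NormedSpace ℝ E] {Z : E → E} {Γ : E → ℝ}

/-- The vector `μ^p(x)` of the paper. -/
noncomputable def lieDerivVec (Z : E → E) (Γ : E → ℝ) (p : ℕ) (x : E) : Fin p → ℝ :=
  fun i => lieDerivIter Z Γ i x

theorem contDiff_lieDerivIter {p i : ℕ} (hZ : ContDiff ℝ ((p - 1 : ℕ) : ℕ∞) Z)
    (hΓ : ContDiff ℝ ((p : ℕ) : ℕ∞) Γ) (hi : i ≤ p) :
    ContDiff ℝ ((p - i : ℕ) : ℕ∞) (lieDerivIter Z Γ i) := by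
  induction i with
  | zero => simpa [lieDerivIter] using hΓ
  | succ i ih =>
    have hsucc : ((p - i : ℕ) : ℕ∞) = ((p - (i + 1) : ℕ) : ℕ∞) + 1 := by
      rw [show p - i = p - (i + 1) + 1 by omega, Nat.cast_succ]
    have hD : ContDiff ℝ ((p - (i + 1) : ℕ) : ℕ∞) (fderiv ℝ (lieDerivIter Z Γ i)) :=
      (ih (by omega)).fderiv_right (by exact_mod_cast hsucc.symm.le)
    exact hD.clm_apply (hZ.of_le (by exact_mod_cast (by omega : p - (i + 1) ≤ p - 1)))

theorem differentiable_lieDerivIter {p i : ℕ} (hZ : ContDiff ℝ ((p - 1 : ℕ) : ℕ∞) Z)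
    (hΓ : ContDiff ℝ ((p : ℕ) : ℕ∞) Γ) (hi : i < p) : Differentiable ℝ (lieDerivIter Z Γ i) :=
  (contDiff_lieDerivIter hZ hΓ hi.le).differentiable (by exact_mod_cast (by omega : p - i ≠ 0))

theorem hasDerivAt_lieDeriv_comp {g : E → ℝ} {γ : ℝ → E} {s : ℝ}
    (hg : DifferentiableAt ℝ g (γ s)) (hγ : HasDerivAt γ (Z (γ s)) s) :
    HasDerivAt (fun u => g (γ u)) (lieDeriv Z g (γ s)) s :=
  hg.hasFDerivAt.comp_hasDerivAt s hγ

theorem lieDerivVec_le_exp_smul_mulVec {p : ℕ}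
    (hdiff : ∀ i < p, Differentiable ℝ (lieDerivIter Z Γ i)) {χ : Fin p → ℝ}
    (hχ : ∀ i : Fin p, (i : ℕ) + 1 < p → 0 ≤ χ i) {M : Set E}
    (hineq : ∀ y ∈ M, lieDerivIter Z Γ p y ≤ ∑ i : Fin p, χ i * lieDerivIter Z Γ i y)
    {γ : ℝ → E} {T : ℝ} (hγ : ∀ s ∈ Icc 0 T, HasDerivAt γ (Z (γ s)) s)
    (hM : ∀ s ∈ Icc 0 T, γ s ∈ M) {t : ℝ} (ht : t ∈ Icc 0 T) :
    lieDerivVec Z Γ p (γ t) ≤ exp (t • companionMatrix p χ) *ᵥ lieDerivVec Z Γ p (γ 0) := by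
  set g : ℝ → Fin p → ℝ := fun s => lieDerivVec Z Γ p (γ s)
  set g' : ℝ → Fin p → ℝ := fun s j => lieDerivIter Z Γ (j + 1) (γ s)
  have hg : ∀ s ∈ Icc 0 T, HasDerivAt g (g' s) s := fun s hs =>
    hasDerivAt_pi.mpr fun j => hasDerivAt_lieDeriv_comp (hdiff j j.isLt _) (hγ s hs)
  refine Matrix.le_exp_smul_mulVec_of_hasDerivAt (companionMatrix_offDiag_nonneg hχ) ht.1
    (g := g) (b := fun s => companionMatrix p χ *ᵥ g s - g' s) (fun s hs => ?_) (fun s hs j => ?_)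
  · rw [sub_sub_cancel]
    exact hg s ⟨hs.1, hs.2.trans ht.2⟩
  · simp only [Pi.sub_apply, Pi.zero_apply, sub_nonneg, g, g']
    unfold lieDerivVec
    rw [companionMatrix_mulVec_apply χ fun k => lieDerivIter Z Γ k (γ s)]
    split_ifs with hj
    · rw [hj]; exact hineq _ (hM s ⟨hs.1, hs.2.trans ht.2⟩)
    · exact le_rfl

end LieDerivative

theorem flow_neg_of_scaled_flow_neg {E : Type*} [AddCommGroup E] [Module ℝ E] {𝓏 : ℝ → E → E}
    {Γ : E → ℝ} {ξ ϑ l : ℝ} (hl : 0 < l) {z : E} (hΓhom : ∀ x, Γ (l • x) = l ^ ϑ * Γ x)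
    (hscale : ∀ t, 𝓏 t (l • z) = l • 𝓏 (l ^ ξ * t) z) {T : ℝ}
    (h : ∀ s ∈ Ico 0 T, Γ (𝓏 s (l • z)) < 0) : ∀ t ∈ Ico 0 (l ^ ξ * T), Γ (𝓏 t z) < 0 := by
  intro t ht
  have hlξ : 0 < l ^ ξ := Real.rpow_pos_of_pos hl ξ
  have hs : t / l ^ ξ ∈ Ico 0 T :=
    ⟨div_nonneg ht.1 hlξ.le, (div_lt_iff₀' hlξ).mpr ht.2⟩
  have hneg := h _ hs
  rw [hscale, mul_div_cancel₀ t hlξ.ne', hΓhom] at hneg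
  exact neg_of_mul_neg_right hneg (Real.rpow_pos_of_pos hl ϑ).le

theorem self_triggering_lower_bound_general {d p : ℕ} (hp : 0 < p)
    (Z : (Fin d → ℝ) → (Fin d → ℝ)) (Γ : (Fin d → ℝ) → ℝ) (ξ ϑ : ℝ)
    (hZsmooth : ContDiff ℝ ((p - 1 : ℕ) : ℕ∞) Z)
    (hΓsmooth : ContDiff ℝ ((p : ℕ) : ℕ∞) Γ)
    (hΓhom : ∀ l : ℝ, 0 < l → ∀ z : Fin d → ℝ, Γ (l • z) = l ^ ϑ * Γ z)
    (𝓏 : ℝ → (Fin d → ℝ) → (Fin d → ℝ))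
    (h𝓏0 : ∀ z : Fin d → ℝ, 𝓏 0 z = z)
    (h𝓏deriv : ∀ (z : Fin d → ℝ) (t : ℝ), HasDerivAt (fun s => 𝓏 s z) (Z (𝓏 t z)) t)
    (hscale : ∀ l : ℝ, 0 < l → ∀ (t : ℝ) (z : Fin d → ℝ),
      𝓏 t (l • z) = l • 𝓏 (l ^ ξ * t) z)
    (z : Fin d → ℝ) (hΓz : Γ z < 0)
    (M : Set (Fin d → ℝ))
    (χ : Fin p → ℝ) (hχ : ∀ i : Fin p, (i : ℕ) + 1 < p → 0 ≤ χ i)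
    (hineq : ∀ y ∈ M, lieDerivIter Z Γ p y ≤ ∑ i : Fin p, χ i * lieDerivIter Z Γ i y)
    (tstar : ℝ) (l : ℝ) (hl : 0 < l)
    (hM : ∀ s ∈ Set.Icc (0 : ℝ) tstar, 𝓏 s (l • z) ∈ M)
    (hnozero : ∀ s ∈ Set.Ioo (0 : ℝ) tstar,
      (NormedSpace.exp (s • companionMatrix p χ)).mulVec
          (fun i : Fin p => lieDerivIter Z Γ i (l • z)) ⟨0, hp⟩ ≠ 0) :
    (∀ t ∈ Set.Ico (0 : ℝ) (l ^ ξ * tstar), Γ (𝓏 t z) < 0) ∧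
      (∀ t : ℝ, 0 < t → Γ (𝓏 t z) = 0 → l ^ ξ * tstar ≤ t) ∧
      ({t : ℝ | 0 < t ∧ Γ (𝓏 t z) = 0}.Nonempty →
        l ^ ξ * tstar ≤ sInf {t : ℝ | 0 < t ∧ Γ (𝓏 t z) = 0}) := by
  set y : ℝ → ℝ := fun s => (exp (s • companionMatrix p χ) *ᵥ lieDerivVec Z Γ p (l • z)) ⟨0, hp⟩
  have hΓ_le_y : ∀ s ∈ Icc 0 tstar, Γ (𝓏 s (l • z)) ≤ y s := fun s hs => by
    have h := lieDerivVec_le_exp_smul_mulVec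
      (fun i hi => differentiable_lieDerivIter hZsmooth hΓsmooth hi) hχ hineq
      (fun s _ => h𝓏deriv (l • z) s) hM hs
    rw [h𝓏0] at h
    exact h ⟨0, hp⟩
  have hy0 : y 0 < 0 := by
    simpa [y, lieDerivVec, lieDerivIter, hΓhom l hl] using
      mul_neg_of_pos_of_neg (Real.rpow_pos_of_pos hl ϑ) hΓz
  have hy : ∀ s ∈ Ico 0 tstar, y s < 0 :=
    ((continuous_apply _).comp (continuous_exp_smul_mulVec _ _)).continuousOn.neg_of_ne_zero
      hy0 hnozero
  have hneg : ∀ t ∈ Ico 0 (l ^ ξ * tstar), Γ (𝓏 t z) < 0 :=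
    flow_neg_of_scaled_flow_neg hl (hΓhom l hl) (fun t => hscale l hl t z) fun s hs =>
      (hΓ_le_y s (Ico_subset_Icc_self hs)).trans_lt (hy s hs)
  have hfirst : ∀ t, 0 < t → Γ (𝓏 t z) = 0 → l ^ ξ * tstar ≤ t := fun t ht hzero =>
    not_lt.mp fun hlt => (hneg t ⟨ht.le, hlt⟩).ne hzero
  exact ⟨hneg, hfirst, fun hne => le_csInf hne fun t ht => hfirst t ht.1 ht.2⟩

/-- Theorem 3 (self-triggering lower bound).  Let `Z` be `C^(p-1)` and homogeneous of
degree `ξ > 0`, `Γ` be `C^p` and homogeneous of degree `ϑ`, and let `𝓏` be the flow of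
`Z` with the homogeneity scaling property.  Fix `z` with `Γ z < 0`, coefficients
`χ_i` (`χ_i ≥ 0` for `i ≤ p - 2`) satisfying `L_Z^p Γ ≤ Σ_i χ_i L_Z^i Γ` on `M`,
`t⋆ > 0` and `l > 0` such that (i) the trajectory of `l • z` stays in `M` on
`[0, t⋆]`, (ii) `Σ_i β_i(t⋆, z) l^(ϑ + i ξ) = 0` (i.e. `y₁(t⋆, μ^p(l • z)) = 0`), and
(iii) `y₁(s, μ^p(l • z)) ≠ 0` for `s ∈ (0, t⋆)`.  Then `Γ (𝓏 t z) < 0` for all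
`t ∈ [0, l^ξ t⋆)`, so the inter-execution time of `z` is at least
`τ↓(z) = l^ξ t⋆`. -/
theorem self_triggering_lower_bound {d p : ℕ} (hp : 0 < p)
    (Z : (Fin d → ℝ) → (Fin d → ℝ)) (Γ : (Fin d → ℝ) → ℝ) (ξ ϑ : ℝ) (hξ : 0 < ξ)
    (hZsmooth : ContDiff ℝ ((p - 1 : ℕ) : ℕ∞) Z)
    (hΓsmooth : ContDiff ℝ ((p : ℕ) : ℕ∞) Γ)
    (hZhom : ∀ l : ℝ, 0 < l → ∀ z : Fin d → ℝ, Z (l • z) = l ^ (ξ + 1) • Z z)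
    (hΓhom : ∀ l : ℝ, 0 < l → ∀ z : Fin d → ℝ, Γ (l • z) = l ^ ϑ * Γ z)
    (𝓏 : ℝ → (Fin d → ℝ) → (Fin d → ℝ))
    (h𝓏0 : ∀ z : Fin d → ℝ, 𝓏 0 z = z)
    (h𝓏deriv : ∀ (z : Fin d → ℝ) (t : ℝ), HasDerivAt (fun s => 𝓏 s z) (Z (𝓏 t z)) t)
    (hscale : ∀ l : ℝ, 0 < l → ∀ (t : ℝ) (z : Fin d → ℝ),
      𝓏 t (l • z) = l • 𝓏 (l ^ ξ * t) z)
    (z : Fin d → ℝ) (hΓz : Γ z < 0)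
    (M : Set (Fin d → ℝ))
    (χ : Fin p → ℝ) (hχ : ∀ i : Fin p, (i : ℕ) + 1 < p → 0 ≤ χ i)
    (hineq : ∀ y ∈ M, lieDerivIter Z Γ p y ≤ ∑ i : Fin p, χ i * lieDerivIter Z Γ i y)
    (tstar : ℝ) (htstar : 0 < tstar) (l : ℝ) (hl : 0 < l)
    (hM : ∀ s ∈ Set.Icc (0 : ℝ) tstar, 𝓏 s (l • z) ∈ M)
    (hroot : ∑ i : Fin p,
      (NormedSpace.exp (tstar • companionMatrix p χ) ⟨0, hp⟩ i *
          lieDerivIter Z Γ i z) * l ^ (ϑ + (i : ℝ) * ξ) = 0)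
    (hnozero : ∀ s ∈ Set.Ioo (0 : ℝ) tstar,
      (NormedSpace.exp (s • companionMatrix p χ)).mulVec
          (fun i : Fin p => lieDerivIter Z Γ i (l • z)) ⟨0, hp⟩ ≠ 0) :
    (∀ t ∈ Set.Ico (0 : ℝ) (l ^ ξ * tstar), Γ (𝓏 t z) < 0) ∧
      (∀ t : ℝ, 0 < t → Γ (𝓏 t z) = 0 → l ^ ξ * tstar ≤ t) ∧
      ({t : ℝ | 0 < t ∧ Γ (𝓏 t z) = 0}.Nonempty →
        l ^ ξ * tstar ≤ sInf {t : ℝ | 0 < t ∧ Γ (𝓏 t z) = 0}) :=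
  self_triggering_lower_bound_general hp Z Γ ξ ϑ hZsmooth hΓsmooth hΓhom 𝓏 h𝓏0 h𝓏deriv hscale z hΓz
    M χ hχ hineq tstar l hl hM hnozero
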